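/- If an incompatible pair of vertices exists in a 2-connected non-geodetic signed graph, then a pair (u,v) of incompatible vertices at minimum distance k lies on a negative cycle of length 2k formed by the union of two internally disjoint shortest u–v paths of opposite signs. -/

import Mathlib

open SimpleGraph

/-- The sign of a walk: the product of the signs of its edges. -/
def walkSign {V : Type*} {G : SimpleGraph V} (σ : V → V → ℤ) :
    {u v : V} → G.Walk u v → ℤ
  | _, _, SimpleGraph.Walk.nil => 1
  | _, _, @SimpleGraph.Walk.cons _ _ a b _ _ p => σ a b * walkSign σ p

/-- A walk is a shortest path if its length equals the distance of its endpoints. -/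
def IsShortest {V : Type*} {G : SimpleGraph V} {u v : V} (p : G.Walk u v) : Prop :=
  p.length = G.dist u v

/-- Two vertices are compatible if all shortest paths between them have the same sign. -/
def PairCompatible {V : Type*} (G : SimpleGraph V) (σ : V → V → ℤ) (u v : V) : Prop :=
  ∀ p q : G.Walk u v, IsShortest p → IsShortest q → walkSign σ p = walkSign σ q

/-- A graph is 2-connected: connected, and still connected after deleting any vertex. -/
def TwoConnected {V : Type*} (G : SimpleGraph V) : Prop :=
  G.Connected ∧ ∀ v : V, (G.induce {u : V | u ≠ v}).Connected

/-- A graph is geodetic if between any two vertices there is a unique shortest path. -/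
def Geodetic {V : Type*} (G : SimpleGraph V) : Prop :=
  ∀ (u v : V) (p q : G.Walk u v), IsShortest p → IsShortest q → p = q

/-!
Take shortest `u`–`v` paths `p`, `q` of opposite signs. If they met at an inner vertex `w`,
the pairs `(u, w)` and `(w, v)` would be closer than `(u, v)`, hence compatible by minimality,
so the two halves of `p` would have the signs of the two halves of `q`, and `p`, `q` would have
the same sign. Thus `p` and `q` are internally disjoint and, being distinct paths, close up to a
cycle of length `2k` whose sign is `walkSign p * walkSign q = -1`.
-/

section

variable {V : Type*} {G : SimpleGraph V} {σ : V → V → ℤ}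

theorem walkSign_append (σ : V → V → ℤ) {u v w : V} (p : G.Walk u v) (q : G.Walk v w) :
    walkSign σ (p.append q) = walkSign σ p * walkSign σ q := by
  induction p with
  | nil => simp [walkSign]
  | cons h p ih => simp [walkSign, ih, mul_assoc]

theorem walkSign_reverse (hsymm : ∀ u v : V, σ u v = σ v u) {u v : V} (p : G.Walk u v) :
    walkSign σ p.reverse = walkSign σ p := by
  induction p with
  | nil => rfl
  | cons h p ih =>
    rw [Walk.reverse_cons, walkSign_append, ih]
    simp [walkSign, hsymm _ _, mul_comm]

theorem walkSign_eq_one_or_neg_one (hσ : ∀ u v : V, G.Adj u v → σ u v = 1 ∨ σ u v = -1)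
    {u v : V} (p : G.Walk u v) : walkSign σ p = 1 ∨ walkSign σ p = -1 := by
  induction p with
  | nil => exact Or.inl rfl
  | cons h p ih =>
    rcases hσ _ _ h with h1 | h1 <;> rcases ih with h2 | h2 <;> simp [walkSign, h1, h2]

theorem walkSign_eq_neg_of_ne (hσ : ∀ u v : V, G.Adj u v → σ u v = 1 ∨ σ u v = -1)
    {u v : V} {p q : G.Walk u v} (h : walkSign σ p ≠ walkSign σ q) :
    walkSign σ p = -walkSign σ q := by
  rcases walkSign_eq_one_or_neg_one hσ p with hp | hp <;>
    rcases walkSign_eq_one_or_neg_one hσ q with hq | hq <;> simp_all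

theorem IsShortest.isPath {u v : V} {p : G.Walk u v} (hp : IsShortest p) : p.IsPath :=
  p.isPath_of_length_eq_dist hp

theorem IsShortest.of_append {u v w : V} {p : G.Walk u w} {q : G.Walk w v}
    (h : IsShortest (p.append q)) : IsShortest p ∧ IsShortest q := by
  have hp : G.dist u w ≤ p.length := dist_le p
  have hq : G.dist w v ≤ q.length := dist_le q
  have htri : G.dist u v ≤ G.dist u w + G.dist w v := p.reachable.dist_triangle_left v
  unfold IsShortest at h ⊢
  rw [Walk.length_append] at h
  omega

def InternallyDisjoint {u v : V} (p q : G.Walk u v) : Prop :=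
  ∀ w ∈ p.support, w ∈ q.support → w = u ∨ w = v

theorem isCycle_append_reverse_of_internallyDisjoint {u v : V} {p q : G.Walk u v}
    (hp : p.IsPath) (hq : q.IsPath) (hne : p ≠ q) (hd : InternallyDisjoint p q) :
    (p.append q.reverse).IsCycle := by
  refine hp.isCycle_append ((Walk.isPath_reverse_iff q).mpr hq) (fun w hwp hwq ↦ ?_) ?_
  · have hw := hd w (List.mem_of_mem_tail hwp)
      (by simpa using List.mem_of_mem_tail hwq)
    grind [Walk.dropLast_support_concat, Walk.IsPath.support_nodup, Walk.support_reverse,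
      Walk.cons_tail_support]
  · grind [Walk.length_reverse, Walk.eq_of_length_le_one]

theorem internallyDisjoint_of_walkSign_ne [DecidableEq V] {u v : V} {p q : G.Walk u v}
    (hp : IsShortest p) (hq : IsShortest q) (hne : walkSign σ p ≠ walkSign σ q)
    (hcloser : ∀ x y : V, G.dist x y < G.dist u v → PairCompatible G σ x y) :
    InternallyDisjoint p q := by
  intro w hwp hwq
  by_contra! ⟨hwu, hwv⟩
  obtain ⟨hp₁, hp₂⟩ := IsShortest.of_append (by rwa [p.take_spec hwp])
  obtain ⟨hq₁, hq₂⟩ := IsShortest.of_append (by rwa [q.take_spec hwq])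
  have hlen₁ := p.length_takeUntil_lt_length hwp hwv
  have hlen₂ := p.length_dropUntil_lt_length hwp hwu
  unfold IsShortest at hp hp₁ hp₂
  have hcompat₁ := hcloser u w (by omega) _ _ hp₁ hq₁
  have hcompat₂ := hcloser w v (by omega) _ _ hp₂ hq₂
  rw [← p.take_spec hwp, ← q.take_spec hwq, walkSign_append, walkSign_append, hcompat₁,
    hcompat₂] at hne
  exact hne rfl

end

theorem incompatible_pair_on_negative_cycle_general {V : Type*} (G : SimpleGraph V)
    (σ : V → V → ℤ)
    (hσ : ∀ u v : V, G.Adj u v → σ u v = 1 ∨ σ u v = -1)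
    (hsymm : ∀ u v : V, σ u v = σ v u)
    {u v : V} {k : ℕ} (hk : G.dist u v = k)
    (huv : ¬ PairCompatible G σ u v)
    (hmin : ∀ x y : V, ¬ PairCompatible G σ x y → G.dist u v ≤ G.dist x y) :
    ∃ (p q : G.Walk u v), IsShortest p ∧ IsShortest q ∧
      walkSign σ p = - walkSign σ q ∧
      (p.append q.reverse).IsCycle ∧
      (p.append q.reverse).length = 2 * k ∧
      walkSign σ (p.append q.reverse) = -1 := by
  classical
  obtain ⟨p, q, hp, hq, hne⟩ : ∃ p q : G.Walk u v,
      IsShortest p ∧ IsShortest q ∧ walkSign σ p ≠ walkSign σ q := by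
    simpa [PairCompatible] using huv
  have hsign := walkSign_eq_neg_of_ne hσ hne
  have hdisj := internallyDisjoint_of_walkSign_ne hp hq hne
    fun x y hxy ↦ by_contra fun hxy' ↦ (hmin x y hxy').not_gt hxy
  refine ⟨p, q, hp, hq, hsign,
    isCycle_append_reverse_of_internallyDisjoint hp.isPath hq.isPath
      (fun h ↦ hne (congrArg _ h)) hdisj, ?_, ?_⟩
  · unfold IsShortest at hp hq
    rw [Walk.length_append, Walk.length_reverse, hp, hq, hk, two_mul]
  · rw [walkSign_append, walkSign_reverse hsymm, hsign]
    rcases walkSign_eq_one_or_neg_one hσ q with h | h <;> simp [h]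

/-- In a 2-connected non-geodetic signed graph, an incompatible pair `(u,v)` at minimum
distance `k` lies on a negative cycle of length `2k` formed by the union of two
internally disjoint shortest `u`–`v` paths of opposite signs. -/
theorem incompatible_pair_on_negative_cycle {V : Type*} (G : SimpleGraph V)
    (σ : V → V → ℤ)
    (hσ : ∀ u v : V, G.Adj u v → σ u v = 1 ∨ σ u v = -1)
    (hsymm : ∀ u v : V, σ u v = σ v u)
    (h2c : TwoConnected G) (hng : ¬ Geodetic G)
    {u v : V} {k : ℕ} (hk : G.dist u v = k)
    (huv : ¬ PairCompatible G σ u v)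
    (hmin : ∀ x y : V, ¬ PairCompatible G σ x y → G.dist u v ≤ G.dist x y) :
    ∃ (p q : G.Walk u v), IsShortest p ∧ IsShortest q ∧
      walkSign σ p = - walkSign σ q ∧
      (p.append q.reverse).IsCycle ∧
      (p.append q.reverse).length = 2 * k ∧
      walkSign σ (p.append q.reverse) = -1 :=
  incompatible_pair_on_negative_cycle_general G σ hσ hsymm hk huv hmin
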